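/- In the Artin braid group B_{m+n} with n ≥ 2, for all 1 ≤ r < i ≤ m the loop element a_i commutes with the conjugated loop σ_{m+1} a_r σ_{m+1}^{−1}: a_i (σ_{m+1} a_r σ_{m+1}^{−1}) = (σ_{m+1} a_r σ_{m+1}^{−1}) a_i. -/

import Mathlib

/-!
Let `F = σ_{m+1} σ_m ⋯ σ_{r+1}`. Conjugation by `F` shifts `σ_j` to `σ_{j+1}` for `r < j ≤ m`:
split `F = A (σ_{j+1} σ_j) B` where `A` commutes with `σ_j` and `B` with `σ_{j+1}`, and apply the
braid relation. Now `σ_{m+1} a_r σ_{m+1}⁻¹ = F σ_r² F⁻¹`, while `F⁻¹ a_i F` is the loop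
`σ_{m+1} ⋯ σ_{i+2} σ_{i+1}² (σ_{m+1} ⋯ σ_{i+2})⁻¹`, a word in generators `σ_s` with `s ≥ r + 2`,
which therefore commutes with `σ_r`.
-/

/-- Defining relations of the Artin braid group on `N` strands, with generators
indexed by `Fin (N-1)` (index `s : Fin (N-1)` corresponds to the 1-based generator
`σ_{s+1}`): the far commutation relations and the braid relations. -/
def braidRels (N : ℕ) : Set (FreeGroup (Fin (N - 1))) :=
  {x | ∃ s t : Fin (N - 1), (s : ℕ) + 2 ≤ (t : ℕ) ∧
      x = FreeGroup.of s * FreeGroup.of t * (FreeGroup.of s)⁻¹ * (FreeGroup.of t)⁻¹} ∪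
  {x | ∃ s t : Fin (N - 1), (s : ℕ) + 1 = (t : ℕ) ∧
      x = FreeGroup.of s * FreeGroup.of t * FreeGroup.of s *
          (FreeGroup.of t)⁻¹ * (FreeGroup.of s)⁻¹ * (FreeGroup.of t)⁻¹}

/-- The Artin braid group on `N` strands. -/
abbrev BraidGroup (N : ℕ) := PresentedGroup (braidRels N)

/-- The generator `σ_s` (1-based, `1 ≤ s ≤ N-1`); junk value `1` out of range. -/
def sig (N s : ℕ) : BraidGroup N :=
  if h : 1 ≤ s ∧ s ≤ N - 1 then PresentedGroup.of ⟨s - 1, by omega⟩ else 1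

/-- The loop element `a_i = σ_m σ_{m-1} ⋯ σ_{i+1} · σ_i² · σ_{i+1}⁻¹ ⋯ σ_m⁻¹`
(so `a_m = σ_m²`) in the braid group on `N` strands, `m` of which are fixed. -/
def loop (N m i : ℕ) : BraidGroup N :=
  (((List.range (m - i)).map (fun l => sig N (m - l))).prod) * (sig N i) ^ 2 *
    (((List.range (m - i)).map (fun l => sig N (m - l))).prod)⁻¹

/-- `λ_l := σ_{m+l} σ_{m+l-1} ⋯ σ_{m+1}`, with `λ_0 := 1`. -/
def lam (N m l : ℕ) : BraidGroup N :=
  ((List.range l).map (fun t => sig N (m + l - t))).prod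

/-- The positive looping `∏_{l=0}^{q-1} λ_l a_j λ_l⁻¹` of a `q`-strand cable of
moving strands around the `j`-th fixed strand. -/
def cable (N m j q : ℕ) : BraidGroup N :=
  ((List.range q).map (fun l => lam N m l * loop N m j * (lam N m l)⁻¹)).prod

section

variable {N : ℕ}

lemma sig_eq_one {s : ℕ} (h : ¬(1 ≤ s ∧ s ≤ N - 1)) : sig N s = 1 :=
  dif_neg h

lemma sig_eq_of {s : ℕ} (h₁ : 1 ≤ s) (h₂ : s ≤ N - 1) :
    sig N s = PresentedGroup.of (⟨s - 1, by omega⟩ : Fin (N - 1)) :=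
  dif_pos ⟨h₁, h₂⟩

lemma commute_sig_sig {s t : ℕ} (h : s + 2 ≤ t) : Commute (sig N s) (sig N t) := by
  by_cases hs : 1 ≤ s ∧ s ≤ N - 1
  · by_cases ht : 1 ≤ t ∧ t ≤ N - 1
    · rw [sig_eq_of hs.1 hs.2, sig_eq_of ht.1 ht.2]
      exact PresentedGroup.mk_eq_mk_of_mul_inv_mem
        (Or.inl ⟨⟨s - 1, by omega⟩, ⟨t - 1, by omega⟩, show s - 1 + 2 ≤ t - 1 by omega, by group⟩)
    · simp [sig_eq_one ht]
  · simp [sig_eq_one hs]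

lemma sig_braid {s : ℕ} (h₁ : 1 ≤ s) (h₂ : s + 1 ≤ N - 1) :
    sig N s * sig N (s + 1) * sig N s = sig N (s + 1) * sig N s * sig N (s + 1) := by
  rw [sig_eq_of h₁ (by omega), sig_eq_of (by omega) h₂]
  simp only [Nat.add_sub_cancel]
  exact PresentedGroup.mk_eq_mk_of_mul_inv_mem
    (Or.inr ⟨⟨s - 1, by omega⟩, ⟨s, by omega⟩, show s - 1 + 1 = s by omega, by group⟩)

def descChain (N p k : ℕ) : BraidGroup N :=
  ((List.range k).map fun l => sig N (p - l)).prod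

lemma descChain_add (p k₁ k₂ : ℕ) :
    descChain N p (k₁ + k₂) = descChain N p k₁ * descChain N (p - k₁) k₂ := by
  simp only [descChain, List.range_add, List.map_append, List.prod_append, List.map_map]
  congr 3
  ext l
  simp only [Function.comp_apply]
  congr 1
  omega

lemma descChain_succ (p k : ℕ) : descChain N p (k + 1) = sig N p * descChain N (p - 1) k := by
  rw [add_comm, descChain_add]
  simp [descChain]

lemma loop_eq (m i : ℕ) :
    loop N m i = descChain N m (m - i) * sig N i ^ 2 * (descChain N m (m - i))⁻¹ :=
  rfl

lemma commute_sig_descChain {j p k : ℕ} (h : j + k + 1 ≤ p) :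
    Commute (sig N j) (descChain N p k) :=
  Commute.list_prod_right _ _ <| by
    simp only [List.mem_map, List.mem_range]
    rintro _ ⟨l, hl, rfl⟩
    exact commute_sig_sig (by omega)

lemma commute_descChain_sig {j p k : ℕ} (h : p + 2 ≤ j) :
    Commute (descChain N p k) (sig N j) :=
  Commute.list_prod_left _ _ <| by
    simp only [List.mem_map, List.mem_range]
    rintro _ ⟨l, hl, rfl⟩
    exact commute_sig_sig (by omega)

/-- `hjp` and `hpk` say that `σ_{j+1} σ_j` occurs in the chain `σ_p ⋯ σ_{p-k+1}`. -/
lemma descChain_inv_mul_sig_mul {j p k : ℕ} (hj : 1 ≤ j) (hjp : j + 1 ≤ p) (hpk : p + 1 ≤ j + k)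
    (hp : p ≤ N - 1) :
    (descChain N p k)⁻¹ * sig N j * descChain N p k = sig N (j + 1) := by
  obtain ⟨k', rfl⟩ : ∃ k', k = p - (j + 1) + (2 + k') := ⟨k - (p - j + 1), by omega⟩
  have hpj : p - (p - (j + 1)) = j + 1 := by omega
  have hsplit : descChain N p (p - (j + 1) + (2 + k')) =
      descChain N p (p - (j + 1)) * (sig N (j + 1) * sig N j) * descChain N (j - 1) k' := by
    rw [descChain_add, descChain_add, hpj, descChain_succ, descChain_succ]
    simp [descChain, mul_assoc]
  set A := descChain N p (p - (j + 1))
  set B := descChain N (j - 1) k'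
  have hA : Commute A (sig N j) := (commute_sig_descChain (by omega)).symm
  have hB : Commute B (sig N (j + 1)) := commute_descChain_sig (by omega)
  rw [hsplit]
  calc (A * (sig N (j + 1) * sig N j) * B)⁻¹ * sig N j * (A * (sig N (j + 1) * sig N j) * B)
      = B⁻¹ * (sig N j)⁻¹ * (sig N (j + 1))⁻¹ * (A⁻¹ * sig N j * A) *
          sig N (j + 1) * sig N j * B := by group
    _ = B⁻¹ * (sig N j)⁻¹ * (sig N (j + 1))⁻¹ * (sig N j * sig N (j + 1) * sig N j) * B := by
        rw [hA.inv_mul_cancel]; group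
    _ = B⁻¹ * sig N (j + 1) * B := by rw [sig_braid hj (by omega)]; group
    _ = sig N (j + 1) := hB.inv_mul_cancel

lemma descChain_inv_mul_descChain_mul {p k q l : ℕ} (hlq : l ≤ q) (hqp : q + 1 ≤ p)
    (hpk : p + l ≤ q + k) (hp : p ≤ N - 1) :
    (descChain N p k)⁻¹ * descChain N q l * descChain N p k = descChain N (q + 1) l := by
  have hconj := map_list_prod (MulAut.conj (descChain N p k)⁻¹)
    ((List.range l).map fun t => sig N (q - t))
  simp only [MulAut.conj_apply, inv_inv, List.map_map] at hconj
  rw [descChain.eq_1 N q l, hconj, descChain.eq_1 N (q + 1) l]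
  refine congrArg List.prod (List.map_congr_left fun t ht => ?_)
  rw [List.mem_range] at ht
  rw [Function.comp_apply, MulAut.conj_apply, inv_inv,
    descChain_inv_mul_sig_mul (by omega) (by omega) (by omega) hp]
  congr 1
  omega

lemma descChain_inv_mul_loop_mul {p k q i : ℕ} (hi : 1 ≤ i) (hiq : i ≤ q) (hqp : q + 1 ≤ p)
    (hpk : p + 1 ≤ i + k) (hp : p ≤ N - 1) :
    (descChain N p k)⁻¹ * loop N q i * descChain N p k = loop N (q + 1) (i + 1) := by
  rw [loop_eq, loop_eq, Nat.add_sub_add_right, sq, sq,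
    ← descChain_inv_mul_descChain_mul (N := N) (k := k) (l := q - i) (by omega) hqp (by omega) hp,
    ← descChain_inv_mul_sig_mul hi (by omega) hpk hp]
  group

lemma commute_sig_loop {j m i : ℕ} (hji : j + 2 ≤ i) (him : i ≤ m) :
    Commute (sig N j) (loop N m i) := by
  have hchain : Commute (sig N j) (descChain N m (m - i)) := commute_sig_descChain (by omega)
  rw [loop_eq]
  exact (hchain.mul_right ((commute_sig_sig hji).pow_right 2)).mul_right hchain.inv_right

lemma sig_mul_loop_mul_sig_inv {m r : ℕ} (hrm : r ≤ m) :
    sig N (m + 1) * loop N m r * (sig N (m + 1))⁻¹ = loop N (m + 1) r := by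
  rw [loop_eq, loop_eq, Nat.succ_sub hrm, descChain_succ, Nat.add_sub_cancel]
  group

end

theorem loop_conjugated_loop_commute_general (m n i r : ℕ) (hn : 2 ≤ n)
    (hri : r < i) (hi2 : i ≤ m) :
    loop (m + n) m i * (sig (m + n) (m + 1) * loop (m + n) m r * (sig (m + n) (m + 1))⁻¹) =
      (sig (m + n) (m + 1) * loop (m + n) m r * (sig (m + n) (m + 1))⁻¹) *
        loop (m + n) m i := by
  rw [sig_mul_loop_mul_sig_inv (by omega), loop_eq (m + 1) r]
  set F := descChain (m + n) (m + 1) (m + 1 - r)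
  have hconj : F⁻¹ * loop (m + n) m i * F = loop (m + n) (m + 1) (i + 1) :=
    descChain_inv_mul_loop_mul (by omega) hi2 le_rfl (by omega) (by omega)
  have hcomm : Commute (F⁻¹ * loop (m + n) m i * F) (sig (m + n) r ^ 2) :=
    hconj ▸ ((commute_sig_loop (by omega) (by omega)).pow_left 2).symm
  have hcomm' := (Commute.conj_iff F).mpr hcomm
  rwa [show F * (F⁻¹ * loop (m + n) m i * F) * F⁻¹ = loop (m + n) m i by group] at hcomm'

/-- For `r < i`, the loop `a_i` commutes with the conjugated loop
`σ_{m+1} a_r σ_{m+1}⁻¹` in the braid group `B_{m+n}` with `n ≥ 2`. -/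
theorem loop_conjugated_loop_commute (m n i r : ℕ) (hm : 1 ≤ m) (hn : 2 ≤ n)
    (hr1 : 1 ≤ r) (hri : r < i) (hi2 : i ≤ m) :
    loop (m + n) m i * (sig (m + n) (m + 1) * loop (m + n) m r * (sig (m + n) (m + 1))⁻¹) =
      (sig (m + n) (m + 1) * loop (m + n) m r * (sig (m + n) (m + 1))⁻¹) *
        loop (m + n) m i :=
  loop_conjugated_loop_commute_general m n i r hn hri hi2
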